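/- Let p ≥ 1 be an integer, let 0 < β ≤ 1, and let x, x̃ > 0 satisfy |x̃ − x| ≤ (β/(100p))·x. Then W_p(x̃) ≈_{1+β/2} W_p(x), i.e. (1+β/2)^{-1}·W_p(x) ≤ W_p(x̃) ≤ (1+β/2)·W_p(x). -/
import Mathlib


/-- The weight function `W_p`: `W_p(x) = x^{-(p+1)}` for `x ≤ 1`, `W_p(x) = 1/x` for `x ≥ 1`. -/
noncomputable def barrierW (p : ℕ) (x : ℝ) : ℝ :=
  if x ≤ 1 then x ^ (-(p : ℤ) - 1) else 1 / x

lemma barrierW_eq_of_le (p : ℕ) {x : ℝ} (h : x ≤ 1) :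
    barrierW p x = (x ^ (p + 1))⁻¹ := by
  have h2 : (-(p : ℤ) - 1) = -((p : ℤ) + 1) := by ring
  rw [barrierW, if_pos h, h2, zpow_neg]
  norm_cast

lemma barrierW_pos (p : ℕ) {x : ℝ} (hx : 0 < x) : 0 < barrierW p x := by
  rw [barrierW]
  split
  · exact zpow_pos hx _
  · positivity

lemma barrierW_anti (p : ℕ) {a b : ℝ} (ha : 0 < a) (hab : a ≤ b) :
    barrierW p b ≤ barrierW p a := by
  have hb : 0 < b := lt_of_lt_of_le ha hab
  by_cases hb1 : b ≤ 1
  · have ha1 : a ≤ 1 := le_trans hab hb1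
    rw [barrierW_eq_of_le p ha1, barrierW_eq_of_le p hb1]
    exact inv_anti₀ (by positivity) (pow_le_pow_left₀ ha.le hab _)
  · push_neg at hb1
    by_cases ha1 : a ≤ 1
    · rw [barrierW_eq_of_le p ha1, barrierW, if_neg (not_le.mpr hb1)]
      have h1 : (1:ℝ)/b ≤ 1 := by
        rw [div_le_one hb]; exact hb1.le
      have h2 : a ^ (p+1) ≤ 1 := pow_le_one₀ ha.le ha1
      have h3 : (1:ℝ) ≤ (a ^ (p+1))⁻¹ := one_le_inv₀ (by positivity) |>.mpr h2
      linarith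
    · push_neg at ha1
      rw [barrierW, if_neg (not_le.mpr hb1), barrierW, if_neg (not_le.mpr ha1)]
      apply div_le_div_of_nonneg_left one_pos.le ha hab

lemma barrierW_mul_mono (p : ℕ) {a b : ℝ} (ha : 0 < a) (hab : a ≤ b) :
    a ^ (p + 1) * barrierW p a ≤ b ^ (p + 1) * barrierW p b := by
  have hb : 0 < b := lt_of_lt_of_le ha hab
  by_cases hb1 : b ≤ 1
  · have ha1 : a ≤ 1 := le_trans hab hb1
    rw [barrierW_eq_of_le p ha1, barrierW_eq_of_le p hb1,
      mul_inv_cancel₀ (by positivity), mul_inv_cancel₀ (by positivity)]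
  · push_neg at hb1
    have hrhs : b ^ (p + 1) * barrierW p b = b ^ p := by
      rw [barrierW, if_neg (not_le.mpr hb1), pow_succ]
      field_simp
    by_cases ha1 : a ≤ 1
    · rw [barrierW_eq_of_le p ha1, mul_inv_cancel₀ (by positivity), hrhs]
      exact one_le_pow₀ hb1.le
    · push_neg at ha1
      have hlhs : a ^ (p + 1) * barrierW p a = a ^ p := by
        rw [barrierW, if_neg (not_le.mpr ha1), pow_succ]
        field_simp
      rw [hlhs, hrhs]
      exact pow_le_pow_left₀ ha.le hab p

lemma barrierW_ratio (p : ℕ) {a b : ℝ} (ha : 0 < a) (hab : a ≤ b) :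
    barrierW p a ≤ (b / a) ^ (p + 1) * barrierW p b := by
  have hb : 0 < b := lt_of_lt_of_le ha hab
  have h := barrierW_mul_mono p ha hab
  rw [div_pow, div_mul_eq_mul_div, le_div_iff₀ (pow_pos ha _), mul_comm]
  exact h

set_option maxHeartbeats 1000000 in
/-- stability of the weight function: if `|x̃ - x| ≤ (β/(100p))·x` then
`W_p(x̃) ≈_{1+β/2} W_p(x)`. -/
theorem barrierW_stable (p : ℕ) (hp : 1 ≤ p) (β : ℝ) (hβ0 : 0 < β) (hβ1 : β ≤ 1)
    (x xt : ℝ) (hx : 0 < x) (hxt : 0 < xt)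
    (hclose : |xt - x| ≤ (β / (100 * p)) * x) :
    (1 + β / 2)⁻¹ * barrierW p x ≤ barrierW p xt ∧
      barrierW p xt ≤ (1 + β / 2) * barrierW p x := by
  set δ : ℝ := β / (100 * p) with hδdef
  have hp1 : (1:ℝ) ≤ (p:ℝ) := by exact_mod_cast hp
  have hδ0 : 0 < δ := by positivity
  have hnδ : ((p:ℝ) + 1) * δ ≤ β / 50 := by
    rw [hδdef, mul_div_assoc', div_le_div_iff₀ (by positivity) (by norm_num)]
    nlinarith
  have hδlt : δ < 1/2 := by nlinarith
  -- Bernoulli: (1-δ)^(p+1) ≥ 1 - (p+1)δ ≥ 1 - β/50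
  have hbern : 1 - ((p:ℝ)+1) * δ ≤ (1 - δ) ^ (p + 1) := by
    have h := one_add_mul_le_pow (a := -δ) (by linarith) (p+1)
    have he : ((1:ℝ) + -δ) = 1 - δ := by ring
    rw [he] at h
    push_cast at h
    linarith
  have hcpos : (0:ℝ) < (1 - δ) ^ (p + 1) := pow_pos (by linarith) _
  have h1 : 1 - β / 50 ≤ (1 - δ) ^ (p + 1) := by linarith
  have hkey : 1 ≤ (1 + β / 2) * (1 - δ) ^ (p + 1) := by nlinarith
  -- (1+δ)^(p+1) ≤ 1 + β/2
  have hA : (1 + δ) ^ (p + 1) ≤ 1 + β / 2 := by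
    have hmul : (1 + δ) ^ (p + 1) * (1 - δ) ^ (p + 1) ≤ 1 := by
      rw [← mul_pow]
      exact pow_le_one₀ (by nlinarith) (by nlinarith)
    nlinarith [pow_pos (by linarith : (0:ℝ) < 1 + δ) (p+1)]
  have habs := abs_le.mp hclose
  have hlow : (1 - δ) * x ≤ xt := by nlinarith [habs.1]
  have hhigh : xt ≤ (1 + δ) * x := by nlinarith [habs.2]
  have hax : (0:ℝ) < (1 - δ) * x := mul_pos (by linarith) hx
  have hbx : (0:ℝ) < (1 + δ) * x := mul_pos (by linarith) hx
  have hWx := barrierW_pos p hx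
  have hWxt := barrierW_pos p hxt
  constructor
  · -- lower bound: W(x) ≤ (1+β/2) W(xt)
    have hr := barrierW_ratio p hx (show x ≤ (1+δ)*x by nlinarith [mul_pos hδ0 hx])
    rw [mul_div_assoc, div_self hx.ne', mul_one] at hr
    have hanti := barrierW_anti p hxt hhigh
    have hWbx := barrierW_pos p hbx
    have hfin : barrierW p x ≤ (1 + β / 2) * barrierW p xt :=
      hr.trans (mul_le_mul hA hanti hWbx.le (by linarith))
    rw [inv_mul_le_iff₀ (by linarith)]
    linarith
  · -- upper bound: W(xt) ≤ W((1-δ)x) ≤ (1+β/2) W(x)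
    have hanti := barrierW_anti p hax hlow
    have hr := barrierW_ratio p hax (show (1-δ)*x ≤ x by nlinarith [mul_pos hδ0 hx])
    have hq : x / ((1-δ)*x) = (1-δ)⁻¹ := by
      rw [mul_comm, ← div_div, div_self hx.ne', one_div]
    rw [hq, inv_pow] at hr
    have hinv : ((1-δ) ^ (p+1))⁻¹ ≤ 1 + β / 2 := by
      rw [inv_eq_one_div, div_le_iff₀ hcpos]
      linarith
    have hWax := barrierW_pos p hax
    calc barrierW p xt ≤ barrierW p ((1-δ)*x) := hanti
      _ ≤ ((1-δ) ^ (p+1))⁻¹ * barrierW p x := hr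
      _ ≤ (1 + β / 2) * barrierW p x := mul_le_mul_of_nonneg_right hinv hWx.le
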